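/- For n ≥ 4 and any set R of partitions of [3] with |R| ≥ 4, the number of partitions of [n] avoiding all patterns in R is 0 if both 1/2/3 and 123 belong to R, and 1 otherwise. -/
import Mathlib

open Finset

structure SetPartition (n : ℕ) where
  blocks : Finset (Finset ℕ)
  nonempty_mem : ∀ B ∈ blocks, B.Nonempty
  disj : ∀ B ∈ blocks, ∀ C ∈ blocks, B ≠ C → Disjoint B C
  cover : blocks.sup id = Finset.Icc 1 n

/-- `σ` contains the pattern `π`: there is an order-preserving choice of elements
and an injective assignment of blocks of `π` to distinct blocks of `σ`. -/
def SetPartition.Contains {n k : ℕ} (σ : SetPartition n) (π : SetPartition k) : Prop :=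
  ∃ f : ℕ → ℕ, StrictMonoOn f (Finset.Icc 1 k : Set ℕ) ∧
    ∃ g : Finset ℕ → Finset ℕ,
      (∀ B ∈ π.blocks, g B ∈ σ.blocks) ∧
      (∀ B ∈ π.blocks, ∀ C ∈ π.blocks, g B = g C → B = C) ∧
      (∀ B ∈ π.blocks, ∀ x ∈ B, f x ∈ g B)

def SetPartition.Avoids {n k : ℕ} (σ : SetPartition n) (π : SetPartition k) : Prop :=
  ¬ σ.Contains π

def pat1_2_3 : SetPartition 3 := ⟨{{1}, {2}, {3}}, by decide, by decide, by decide⟩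
def pat1_23 : SetPartition 3 := ⟨{{1}, {2, 3}}, by decide, by decide, by decide⟩
def pat12_3 : SetPartition 3 := ⟨{{1, 2}, {3}}, by decide, by decide, by decide⟩
def pat13_2 : SetPartition 3 := ⟨{{1, 3}, {2}}, by decide, by decide, by decide⟩
def pat123 : SetPartition 3 := ⟨{{1, 2, 3}}, by decide, by decide, by decide⟩

/-! ### Auxiliary lemmas -/

lemma SetPartition.ext' {n : ℕ} {σ τ : SetPartition n} (h : σ.blocks = τ.blocks) : σ = τ := by
  cases σ; cases τ; simpa using h

lemma SetPartition.block_subset {n : ℕ} (σ : SetPartition n) {B : Finset ℕ}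
    (hB : B ∈ σ.blocks) : B ⊆ Finset.Icc 1 n := by
  have := Finset.le_sup (f := id) hB
  rwa [σ.cover] at this

lemma SetPartition.exists_block {n : ℕ} (σ : SetPartition n) {x : ℕ}
    (hx : x ∈ Finset.Icc 1 n) : ∃ B ∈ σ.blocks, x ∈ B := by
  rw [← σ.cover] at hx
  simpa using (Finset.mem_sup.mp hx)

set_option maxRecDepth 10000 in
lemma classify_aux : ∀ s ∈ ((Finset.Icc 1 3 : Finset ℕ).powerset.erase ∅).powerset,
    (∀ B ∈ s, ∀ C ∈ s, B ≠ C → Disjoint B C) → s.sup id = Finset.Icc 1 3 →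
    (s = ({{1},{2},{3}} : Finset (Finset ℕ)) ∨ s = {{1},{2,3}} ∨ s = {{1,2},{3}} ∨
     s = {{1,3},{2}} ∨ s = {{1,2,3}}) := by decide

lemma classify (π : SetPartition 3) :
    π = pat1_2_3 ∨ π = pat1_23 ∨ π = pat12_3 ∨ π = pat13_2 ∨ π = pat123 := by
  have hmem : π.blocks ∈ ((Finset.Icc 1 3 : Finset ℕ).powerset.erase ∅).powerset := by
    rw [Finset.mem_powerset]
    intro B hB
    rw [Finset.mem_erase, Finset.mem_powerset]
    exact ⟨Finset.nonempty_iff_ne_empty.mp (π.nonempty_mem B hB), π.block_subset hB⟩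
  have := classify_aux π.blocks hmem π.disj π.cover
  rcases this with h | h | h | h | h
  · exact Or.inl (SetPartition.ext' h)
  · exact Or.inr (Or.inl (SetPartition.ext' h))
  · exact Or.inr (Or.inr (Or.inl (SetPartition.ext' h)))
  · exact Or.inr (Or.inr (Or.inr (Or.inl (SetPartition.ext' h))))
  · exact Or.inr (Or.inr (Or.inr (Or.inr (SetPartition.ext' h))))

lemma pat_ne {σ τ : SetPartition 3} (h : σ.blocks ≠ τ.blocks) : σ ≠ τ :=
  fun e => h (congrArg _ e)

/-- the order-preserving map sending 1,2,3 to a,b,c -/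
def f3 (a b c : ℕ) : ℕ → ℕ := fun x => if x ≤ 1 then a else if x = 2 then b else c

lemma f3_mono {a b c : ℕ} (h1 : a < b) (h2 : b < c) :
    StrictMonoOn (f3 a b c) (Finset.Icc 1 3 : Set ℕ) := by
  intro x hx y hy hxy
  simp only [Finset.coe_Icc, Set.mem_Icc] at hx hy
  obtain ⟨hx1, hx3⟩ := hx
  obtain ⟨hy1, hy3⟩ := hy
  interval_cases x <;> interval_cases y <;> simp_all [f3] <;> omega

lemma f3_1 (a b c : ℕ) : f3 a b c 1 = a := by simp [f3]
lemma f3_2 (a b c : ℕ) : f3 a b c 2 = b := by simp [f3]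
lemma f3_3 (a b c : ℕ) : f3 a b c 3 = c := by simp [f3]

section contains
variable {n : ℕ} {σ : SetPartition n}

lemma contains_123 {B : Finset ℕ} (hB : B ∈ σ.blocks) {a b c : ℕ}
    (ha : a ∈ B) (hb : b ∈ B) (hc : c ∈ B) (hab : a < b) (hbc : b < c) :
    σ.Contains pat123 := by
  refine ⟨f3 a b c, f3_mono hab hbc, fun _ => B, ?_, ?_, ?_⟩
  · intro S hS; exact hB
  · intro S hS T hT _
    simp only [pat123] at hS hT
    simp only [Finset.mem_singleton] at hS hT
    rw [hS, hT]
  · intro S hS x hx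
    simp only [pat123, Finset.mem_singleton] at hS
    subst hS
    fin_cases hx <;> simp [f3_1, f3_2, f3_3, ha, hb, hc]

lemma contains_1_2_3 {B C D : Finset ℕ} (hB : B ∈ σ.blocks) (hC : C ∈ σ.blocks)
    (hD : D ∈ σ.blocks) (hBC : B ≠ C) (hBD : B ≠ D) (hCD : C ≠ D) {a b c : ℕ}
    (ha : a ∈ B) (hb : b ∈ C) (hc : c ∈ D) (hab : a < b) (hbc : b < c) :
    σ.Contains pat1_2_3 := by
  refine ⟨f3 a b c, f3_mono hab hbc,
    fun S => if 1 ∈ S then B else if 2 ∈ S then C else D, ?_, ?_, ?_⟩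
  · intro S hS
    simp only [pat1_2_3, Finset.mem_insert, Finset.mem_singleton] at hS
    rcases hS with h | h | h <;> subst h <;> simp [hB, hC, hD]
  · intro S hS T hT hg
    simp only [pat1_2_3, Finset.mem_insert, Finset.mem_singleton] at hS hT
    rcases hS with h | h | h <;> rcases hT with h' | h' | h' <;> subst h <;> subst h' <;>
      simp_all <;> simp_all
  · intro S hS x hx
    simp only [pat1_2_3, Finset.mem_insert, Finset.mem_singleton] at hS
    rcases hS with h | h | h <;> subst h <;> fin_cases hx <;>
      simp [f3_1, f3_2, f3_3, ha, hb, hc]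

lemma contains_1_23 {B C : Finset ℕ} (hB : B ∈ σ.blocks) (hC : C ∈ σ.blocks)
    (hBC : B ≠ C) {a b c : ℕ} (ha : a ∈ B) (hb : b ∈ C) (hc : c ∈ C)
    (hab : a < b) (hbc : b < c) : σ.Contains pat1_23 := by
  refine ⟨f3 a b c, f3_mono hab hbc, fun S => if 1 ∈ S then B else C, ?_, ?_, ?_⟩
  · intro S hS
    simp only [pat1_23, Finset.mem_insert, Finset.mem_singleton] at hS
    rcases hS with h | h <;> subst h <;> simp [hB, hC]
  · intro S hS T hT hg
    simp only [pat1_23, Finset.mem_insert, Finset.mem_singleton] at hS hT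
    rcases hS with h | h <;> rcases hT with h' | h' <;> subst h <;> subst h' <;> simp_all
  · intro S hS x hx
    simp only [pat1_23, Finset.mem_insert, Finset.mem_singleton] at hS
    rcases hS with h | h <;> subst h <;> fin_cases hx <;>
      simp [f3_1, f3_2, f3_3, ha, hb, hc]

lemma contains_12_3 {B C : Finset ℕ} (hB : B ∈ σ.blocks) (hC : C ∈ σ.blocks)
    (hBC : B ≠ C) {a b c : ℕ} (ha : a ∈ B) (hb : b ∈ B) (hc : c ∈ C)
    (hab : a < b) (hbc : b < c) : σ.Contains pat12_3 := by
  refine ⟨f3 a b c, f3_mono hab hbc, fun S => if 1 ∈ S then B else C, ?_, ?_, ?_⟩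
  · intro S hS
    simp only [pat12_3, Finset.mem_insert, Finset.mem_singleton] at hS
    rcases hS with h | h <;> subst h <;> simp [hB, hC]
  · intro S hS T hT hg
    simp only [pat12_3, Finset.mem_insert, Finset.mem_singleton] at hS hT
    rcases hS with h | h <;> rcases hT with h' | h' <;> subst h <;> subst h' <;> simp_all
  · intro S hS x hx
    simp only [pat12_3, Finset.mem_insert, Finset.mem_singleton] at hS
    rcases hS with h | h <;> subst h <;> fin_cases hx <;>
      simp [f3_1, f3_2, f3_3, ha, hb, hc]

lemma contains_13_2 {B C : Finset ℕ} (hB : B ∈ σ.blocks) (hC : C ∈ σ.blocks)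
    (hBC : B ≠ C) {a b c : ℕ} (ha : a ∈ B) (hb : b ∈ C) (hc : c ∈ B)
    (hab : a < b) (hbc : b < c) : σ.Contains pat13_2 := by
  refine ⟨f3 a b c, f3_mono hab hbc, fun S => if 1 ∈ S then B else C, ?_, ?_, ?_⟩
  · intro S hS
    simp only [pat13_2, Finset.mem_insert, Finset.mem_singleton] at hS
    rcases hS with h | h <;> subst h <;> simp [hB, hC]
  · intro S hS T hT hg
    simp only [pat13_2, Finset.mem_insert, Finset.mem_singleton] at hS hT
    rcases hS with h | h <;> rcases hT with h' | h' <;> subst h <;> subst h' <;> simp_all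
  · intro S hS x hx
    simp only [pat13_2, Finset.mem_insert, Finset.mem_singleton] at hS
    rcases hS with h | h <;> subst h <;> fin_cases hx <;>
      simp [f3_1, f3_2, f3_3, ha, hb, hc]

end contains

section structural
variable {n : ℕ} {σ : SetPartition n}

lemma ne_of_mem_distinct {B C : Finset ℕ} (hB : B ∈ σ.blocks) (hC : C ∈ σ.blocks)
    (hBC : B ≠ C) {x y : ℕ} (hx : x ∈ B) (hy : y ∈ C) : x ≠ y := by
  intro h
  subst h
  exact Finset.disjoint_left.mp (σ.disj B hB C hC hBC) hx hy

/-- unordered version for three distinct blocks -/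
lemma contains_1_2_3' {B C D : Finset ℕ} (hB : B ∈ σ.blocks) (hC : C ∈ σ.blocks)
    (hD : D ∈ σ.blocks) (hBC : B ≠ C) (hBD : B ≠ D) (hCD : C ≠ D) {a b c : ℕ}
    (ha : a ∈ B) (hb : b ∈ C) (hc : c ∈ D) : σ.Contains pat1_2_3 := by
  have hab := ne_of_mem_distinct hB hC hBC ha hb
  have hac := ne_of_mem_distinct hB hD hBD ha hc
  have hbc := ne_of_mem_distinct hC hD hCD hb hc
  rcases lt_trichotomy a b with h1 | h1 | h1
  · rcases lt_trichotomy b c with h2 | h2 | h2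
    · exact contains_1_2_3 hB hC hD hBC hBD hCD ha hb hc h1 h2
    · exact absurd h2 hbc
    · rcases lt_trichotomy a c with h3 | h3 | h3
      · exact contains_1_2_3 hB hD hC hBD hBC (Ne.symm hCD) ha hc hb h3 h2
      · exact absurd h3 hac
      · exact contains_1_2_3 hD hB hC (Ne.symm hBD) (Ne.symm hCD) hBC hc ha hb h3 h1
  · exact absurd h1 hab
  · rcases lt_trichotomy a c with h2 | h2 | h2
    · exact contains_1_2_3 hC hB hD (Ne.symm hBC) hCD hBD hb ha hc h1 h2
    · exact absurd h2 hac
    · rcases lt_trichotomy b c with h3 | h3 | h3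
      · exact contains_1_2_3 hC hD hB hCD (Ne.symm hBC) (Ne.symm hBD) hb hc ha h3 h2
      · exact absurd h3 hbc
      · exact contains_1_2_3 hD hC hB (Ne.symm hCD) (Ne.symm hBD) (Ne.symm hBC) hc hb ha h3 h1

/-- unordered version for a block with three distinct elements -/
lemma contains_123' {B : Finset ℕ} (hB : B ∈ σ.blocks) {a b c : ℕ}
    (ha : a ∈ B) (hb : b ∈ B) (hc : c ∈ B) (hab : a ≠ b) (hac : a ≠ c) (hbc : b ≠ c) :
    σ.Contains pat123 := by
  rcases lt_trichotomy a b with h1 | h1 | h1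
  · rcases lt_trichotomy b c with h2 | h2 | h2
    · exact contains_123 hB ha hb hc h1 h2
    · exact absurd h2 hbc
    · rcases lt_trichotomy a c with h3 | h3 | h3
      · exact contains_123 hB ha hc hb h3 h2
      · exact absurd h3 hac
      · exact contains_123 hB hc ha hb h3 h1
  · exact absurd h1 hab
  · rcases lt_trichotomy a c with h2 | h2 | h2
    · exact contains_123 hB hb ha hc h1 h2
    · exact absurd h2 hac
    · rcases lt_trichotomy b c with h3 | h3 | h3
      · exact contains_123 hB hb hc ha h3 h2
      · exact absurd h3 hbc
      · exact contains_123 hB hc hb ha h3 h1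

/-- a block with two elements plus an element elsewhere gives one of the middle patterns -/
lemma contains_middle {B C : Finset ℕ} (hB : B ∈ σ.blocks) (hC : C ∈ σ.blocks)
    (hBC : B ≠ C) {a b c : ℕ} (ha : a ∈ B) (hb : b ∈ B) (hab : a < b) (hc : c ∈ C) :
    σ.Contains pat1_23 ∨ σ.Contains pat13_2 ∨ σ.Contains pat12_3 := by
  have hca := ne_of_mem_distinct hC hB (Ne.symm hBC) hc ha
  have hcb := ne_of_mem_distinct hC hB (Ne.symm hBC) hc hb
  rcases lt_trichotomy c a with h | h | h
  · exact Or.inl (contains_1_23 hC hB (Ne.symm hBC) hc ha hb h hab)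
  · exact absurd h hca
  · rcases lt_trichotomy c b with h2 | h2 | h2
    · exact Or.inr (Or.inl (contains_13_2 hB hC hBC ha hc hb h h2))
    · exact absurd h2 hcb
    · exact Or.inr (Or.inr (contains_12_3 hB hC hBC ha hb hc hab h2))

end structural

/-! ### The two canonical avoiders -/

def oneBlock (n : ℕ) (hn : 1 ≤ n) : SetPartition n :=
  ⟨{Finset.Icc 1 n},
   by intro B hB; rw [Finset.mem_singleton] at hB; subst hB
      exact ⟨1, by simp [hn]⟩,
   by intro B hB C hC hBC
      rw [Finset.mem_singleton] at hB hC
      exact absurd (hB.trans hC.symm) hBC,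
   by simp⟩

def singBlocks (n : ℕ) : SetPartition n :=
  ⟨(Finset.Icc 1 n).image (fun x => {x}),
   by intro B hB
      rw [Finset.mem_image] at hB
      obtain ⟨x, _, rfl⟩ := hB
      exact ⟨x, Finset.mem_singleton_self x⟩,
   by intro B hB C hC hBC
      rw [Finset.mem_image] at hB hC
      obtain ⟨x, _, rfl⟩ := hB
      obtain ⟨y, _, rfl⟩ := hC
      simp only [Finset.disjoint_singleton_left, Finset.mem_singleton]
      intro h; exact hBC (by rw [h]),
   by ext x
      rw [Finset.mem_sup]
      constructor
      · rintro ⟨B, hB, hx⟩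
        rw [Finset.mem_image] at hB
        obtain ⟨y, hy, rfl⟩ := hB
        simp only [id, Finset.mem_singleton] at hx
        rwa [hx]
      · intro hx
        exact ⟨{x}, Finset.mem_image_of_mem _ hx, Finset.mem_singleton_self x⟩⟩

lemma oneBlock_avoids {n : ℕ} (hn : 1 ≤ n) {π : SetPartition 3} {B C : Finset ℕ}
    (hB : B ∈ π.blocks) (hC : C ∈ π.blocks) (hBC : B ≠ C) :
    (oneBlock n hn).Avoids π := by
  rintro ⟨f, hf, g, hg1, hg2, hg3⟩
  have h1 := hg1 B hB
  have h2 := hg1 C hC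
  simp only [oneBlock, Finset.mem_singleton] at h1 h2
  exact hBC (hg2 B hB C hC (h1.trans h2.symm))

lemma singBlocks_avoids {n : ℕ} {π : SetPartition 3} {B : Finset ℕ}
    (hB : B ∈ π.blocks) {x y : ℕ} (hx : x ∈ B) (hy : y ∈ B) (hxy : x < y) :
    (singBlocks n).Avoids π := by
  rintro ⟨f, hf, g, hg1, hg2, hg3⟩
  have hxI : x ∈ (Finset.Icc 1 3 : Finset ℕ) := π.block_subset hB hx
  have hyI : y ∈ (Finset.Icc 1 3 : Finset ℕ) := π.block_subset hB hy
  have hlt : f x < f y := hf (by simpa using hxI) (by simpa using hyI) hxy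
  have h1 := hg3 B hB x hx
  have h2 := hg3 B hB y hy
  have := hg1 B hB
  simp only [singBlocks, Finset.mem_image] at this
  obtain ⟨z, _, hz⟩ := this
  rw [← hz, Finset.mem_singleton] at h1 h2
  omega

lemma eq_oneBlock {n : ℕ} (hn : 1 ≤ n) {σ : SetPartition n} {B : Finset ℕ}
    (h : σ.blocks = {B}) : σ = oneBlock n hn := by
  apply SetPartition.ext'
  have hc := σ.cover
  rw [h] at hc
  simp only [Finset.sup_singleton, id] at hc
  rw [oneBlock, h, hc]

lemma eq_singBlocks {n : ℕ} {σ : SetPartition n}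
    (h : ∀ B ∈ σ.blocks, B.card = 1) : σ = singBlocks n := by
  apply SetPartition.ext'
  show σ.blocks = (Finset.Icc 1 n).image (fun x => {x})
  ext B
  constructor
  · intro hB
    obtain ⟨x, hx⟩ := Finset.card_eq_one.mp (h B hB)
    subst hx
    rw [Finset.mem_image]
    exact ⟨x, σ.block_subset hB (Finset.mem_singleton_self x), rfl⟩
  · intro hB
    rw [Finset.mem_image] at hB
    obtain ⟨x, hx, rfl⟩ := hB
    obtain ⟨C, hC, hxC⟩ := σ.exists_block hx
    obtain ⟨y, hy⟩ := Finset.card_eq_one.mp (h C hC)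
    subst hy
    rw [Finset.mem_singleton] at hxC
    subst hxC
    exact hC

/-! ### Structural dichotomies -/

section dicho
variable {n : ℕ} {σ : SetPartition n}

lemma contains_of_three_blocks (h : 3 ≤ σ.blocks.card) : σ.Contains pat1_2_3 := by
  obtain ⟨t, ht, hcard⟩ := Finset.exists_subset_card_eq h
  obtain ⟨B, C, D, hBC, hBD, hCD, rfl⟩ := Finset.card_eq_three.mp hcard
  have hB : B ∈ σ.blocks := ht (by simp)
  have hC : C ∈ σ.blocks := ht (by simp)
  have hD : D ∈ σ.blocks := ht (by simp)
  obtain ⟨a, ha⟩ := σ.nonempty_mem B hB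
  obtain ⟨b, hb⟩ := σ.nonempty_mem C hC
  obtain ⟨c, hc⟩ := σ.nonempty_mem D hD
  exact contains_1_2_3' hB hC hD hBC hBD hCD ha hb hc

lemma contains_of_big_block {B : Finset ℕ} (hB : B ∈ σ.blocks) (h : 3 ≤ B.card) :
    σ.Contains pat123 := by
  obtain ⟨t, ht, hcard⟩ := Finset.exists_subset_card_eq h
  obtain ⟨a, b, c, hab, hac, hbc, rfl⟩ := Finset.card_eq_three.mp hcard
  exact contains_123' hB (ht (by simp)) (ht (by simp)) (ht (by simp)) hab hac hbc

lemma blocks_nonempty (hn : 1 ≤ n) : σ.blocks.Nonempty := by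
  rcases Finset.eq_empty_or_nonempty σ.blocks with h | h
  · exfalso
    have := σ.cover
    rw [h] at this
    simp only [Finset.sup_empty] at this
    have : (1 : ℕ) ∈ (⊥ : Finset ℕ) := by rw [this]; simp [hn]
    simp at this
  · exact h

lemma two_two {B C : Finset ℕ} (hB : B ∈ σ.blocks) (hC : C ∈ σ.blocks) (hBC : B ≠ C)
    {a b c d : ℕ} (ha : a ∈ B) (hb : b ∈ B) (hc : c ∈ C) (hd : d ∈ C)
    (hab : a < b) (hcd : c < d) :
    σ.Contains pat1_23 ∧ σ.Contains pat12_3 := by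
  have hac := ne_of_mem_distinct hB hC hBC ha hc
  have hbd := ne_of_mem_distinct hB hC hBC hb hd
  constructor
  · rcases lt_or_gt_of_ne hac with h | h
    · exact contains_1_23 hB hC hBC ha hc hd h hcd
    · exact contains_1_23 hC hB (Ne.symm hBC) hc ha hb h hab
  · rcases lt_or_gt_of_ne hbd with h | h
    · exact contains_12_3 hB hC hBC ha hb hd hab h
    · exact contains_12_3 hC hB (Ne.symm hBC) hc hd hb hcd h

lemma card_Icc_one (n : ℕ) : (Finset.Icc 1 n).card = n := by simp

/-- If σ has at most 2 blocks, all of size ≤ 2, and n ≥ 4 then the blocks are two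
blocks of size two. -/
lemma two_blocks_of_small (hn : 4 ≤ n) (h1 : σ.blocks.card ≤ 2)
    (h2 : ∀ B ∈ σ.blocks, B.card ≤ 2) :
    ∃ B C, B ∈ σ.blocks ∧ C ∈ σ.blocks ∧ B ≠ C ∧ B.card = 2 ∧ C.card = 2 := by
  have hcov : (σ.blocks.sup id).card = n := by rw [σ.cover]; simp
  interval_cases hc : σ.blocks.card
  · exfalso
    rw [Finset.card_eq_zero.mp hc] at hcov
    simp at hcov
    omega
  · exfalso
    obtain ⟨B, hB⟩ := Finset.card_eq_one.mp hc
    rw [hB] at hcov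
    simp only [Finset.sup_singleton, id] at hcov
    have := h2 B (by rw [hB]; simp)
    omega
  · obtain ⟨B, C, hBC, hblocks⟩ := Finset.card_eq_two.mp hc
    have hB : B ∈ σ.blocks := by rw [hblocks]; simp
    have hC : C ∈ σ.blocks := by rw [hblocks]; simp
    have hBle := h2 B hB
    have hCle := h2 C hC
    have hsup : σ.blocks.sup id = B ∪ C := by rw [hblocks]; simp [Finset.sup_insert]
    have hcard : (B ∪ C).card ≤ B.card + C.card := Finset.card_union_le B C
    rw [hsup] at hcov
    exact ⟨B, C, hB, hC, hBC, by omega, by omega⟩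

lemma dichoA (hn : 4 ≤ n) :
    σ.Contains pat1_2_3 ∨ σ.Contains pat123 ∨
      (σ.Contains pat1_23 ∧ σ.Contains pat12_3) := by
  by_cases h3 : 3 ≤ σ.blocks.card
  · exact Or.inl (contains_of_three_blocks h3)
  by_cases hbig : ∃ B ∈ σ.blocks, 3 ≤ B.card
  · obtain ⟨B, hB, hcard⟩ := hbig
    exact Or.inr (Or.inl (contains_of_big_block hB hcard))
  push_neg at h3 hbig
  obtain ⟨B, C, hB, hC, hBC, hBcard, hCcard⟩ :=
    two_blocks_of_small (σ := σ) hn (by omega) (fun B hB => by have := hbig B hB; omega)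
  obtain ⟨a, b, hab, rfl⟩ := Finset.card_eq_two.mp hBcard
  obtain ⟨c, d, hcd, rfl⟩ := Finset.card_eq_two.mp hCcard
  refine Or.inr (Or.inr ?_)
  rcases lt_or_gt_of_ne hab with h1 | h1 <;> rcases lt_or_gt_of_ne hcd with h2 | h2
  · exact two_two hB hC hBC (by simp) (by simp) (by simp) (by simp) h1 h2
  · exact two_two hB hC hBC (by simp) (by simp) (by simp) (by simp) h1 h2
  · exact two_two hB hC hBC (by simp) (by simp) (by simp) (by simp) h1 h2
  · exact two_two hB hC hBC (by simp) (by simp) (by simp) (by simp) h1 h2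

lemma dichoB (hn : 4 ≤ n) :
    σ = oneBlock n (by omega) ∨ σ.Contains pat1_2_3 ∨
      (σ.Contains pat1_23 ∨ σ.Contains pat13_2 ∨ σ.Contains pat12_3) := by
  by_cases h3 : 3 ≤ σ.blocks.card
  · exact Or.inr (Or.inl (contains_of_three_blocks h3))
  rcases Nat.lt_or_ge σ.blocks.card 2 with h2 | h2
  · left
    obtain ⟨B, hB⟩ := blocks_nonempty (n := n) (by omega)
    have : σ.blocks.card = 1 := by
      have : 1 ≤ σ.blocks.card := Finset.card_pos.mpr ⟨B, hB⟩
      omega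
    obtain ⟨D, hD⟩ := Finset.card_eq_one.mp this
    exact eq_oneBlock _ hD
  · -- exactly two blocks
    have hc2 : σ.blocks.card = 2 := by omega
    obtain ⟨B, C, hBC, hblocks⟩ := Finset.card_eq_two.mp hc2
    have hB : B ∈ σ.blocks := by rw [hblocks]; simp
    have hC : C ∈ σ.blocks := by rw [hblocks]; simp
    have hcov : (σ.blocks.sup id).card = n := by rw [σ.cover]; simp
    have hsup : σ.blocks.sup id = B ∪ C := by rw [hblocks]; simp [Finset.sup_insert]
    rw [hsup] at hcov
    have hcard : (B ∪ C).card ≤ B.card + C.card := Finset.card_union_le B C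
    -- one of the blocks has at least 2 elements
    rcases Nat.lt_or_ge B.card 2 with hBc | hBc
    · have hCc : 2 ≤ C.card := by omega
      obtain ⟨a, haC, b, hbC, hab⟩ := Finset.one_lt_card.mp hCc
      obtain ⟨c, hcB⟩ := σ.nonempty_mem B hB
      rcases lt_or_gt_of_ne hab with h | h
      · exact Or.inr (Or.inr (contains_middle hC hB (Ne.symm hBC) haC hbC h hcB))
      · exact Or.inr (Or.inr (contains_middle hC hB (Ne.symm hBC) hbC haC h hcB))
    · obtain ⟨a, haB, b, hbB, hab⟩ := Finset.one_lt_card.mp hBc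
      obtain ⟨c, hcC⟩ := σ.nonempty_mem C hC
      rcases lt_or_gt_of_ne hab with h | h
      · exact Or.inr (Or.inr (contains_middle hB hC hBC haB hbB h hcC))
      · exact Or.inr (Or.inr (contains_middle hB hC hBC hbB haB h hcC))

lemma dichoC (hn : 4 ≤ n) :
    σ = singBlocks n ∨ σ.Contains pat123 ∨
      (σ.Contains pat1_23 ∨ σ.Contains pat13_2 ∨ σ.Contains pat12_3) := by
  by_cases hbig : ∃ B ∈ σ.blocks, 3 ≤ B.card
  · obtain ⟨B, hB, hcard⟩ := hbig
    exact Or.inr (Or.inl (contains_of_big_block hB hcard))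
  push_neg at hbig
  by_cases h2 : ∃ B ∈ σ.blocks, B.card = 2
  · obtain ⟨B, hB, hBc⟩ := h2
    have hlt : B.card < (Finset.Icc 1 n).card := by rw [card_Icc_one]; omega
    have hss : B ⊂ Finset.Icc 1 n := Finset.ssubset_iff_subset_ne.mpr
      ⟨σ.block_subset hB, fun h => by rw [h] at hlt; omega⟩
    obtain ⟨x, hxI, hxB⟩ := Finset.exists_of_ssubset hss
    obtain ⟨C, hC, hxC⟩ := σ.exists_block hxI
    have hBC : B ≠ C := fun h => hxB (h ▸ hxC)
    obtain ⟨a, b, hab, rfl⟩ := Finset.card_eq_two.mp hBc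
    rcases lt_or_gt_of_ne hab with h | h
    · exact Or.inr (Or.inr (contains_middle hB hC hBC (by simp) (by simp) h hxC))
    · exact Or.inr (Or.inr (contains_middle hB hC hBC (by simp) (by simp) h hxC))
  · push_neg at h2
    left
    apply eq_singBlocks
    intro B hB
    have h1 := σ.nonempty_mem B hB
    have := hbig B hB
    have := h2 B hB
    have := Finset.card_pos.mpr h1
    omega

end dicho

/-! ### Counting helpers -/

lemma ncard_le_three' {α : Type*} (p q r : α) : ({p, q, r} : Set α).ncard ≤ 3 := by
  have h1 := Set.ncard_insert_le p ({q, r} : Set α)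
  have h2 := Set.ncard_insert_le q ({r} : Set α)
  have h3 := Set.ncard_singleton r
  omega

lemma ncard_le_four' {α : Type*} (p q r t : α) : ({p, q, r, t} : Set α).ncard ≤ 4 := by
  have h1 := Set.ncard_insert_le p ({q, r, t} : Set α)
  have h2 := ncard_le_three' q r t
  omega

open Classical in
theorem stmt8 (n : ℕ) (hn : 4 ≤ n) (R : Set (SetPartition 3)) (hR : 4 ≤ R.ncard) :
    ({σ : SetPartition n | ∀ π ∈ R, σ.Avoids π}).ncard =
      if pat1_2_3 ∈ R ∧ pat123 ∈ R then 0 else 1 := by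
  split_ifs with hcase
  · -- both `1/2/3` and `123` are in `R`: no avoiders
    have : ({σ : SetPartition n | ∀ π ∈ R, σ.Avoids π}) = ∅ := by
      rw [Set.eq_empty_iff_forall_notMem]
      intro σ hσ
      simp only [Set.mem_setOf_eq] at hσ
      rcases dichoA (σ := σ) hn with h | h | ⟨h1, h2⟩
      · exact hσ pat1_2_3 hcase.1 h
      · exact hσ pat123 hcase.2 h
      · by_cases hm : pat1_23 ∈ R
        · exact hσ _ hm h1
        by_cases hm2 : pat12_3 ∈ R
        · exact hσ _ hm2 h2
        have hsub : R ⊆ {pat1_2_3, pat13_2, pat123} := by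
          intro π hπ
          rcases classify π with rfl | rfl | rfl | rfl | rfl
          · exact Set.mem_insert _ _
          · exact absurd hπ hm
          · exact absurd hπ hm2
          · exact Set.mem_insert_of_mem _ (Set.mem_insert _ _)
          · exact Set.mem_insert_of_mem _ (Set.mem_insert_of_mem _ rfl)
        have := Set.ncard_le_ncard hsub (Set.toFinite _)
        have := ncard_le_three' pat1_2_3 pat13_2 pat123
        omega
    rw [this, Set.ncard_empty]
  · -- exactly one of the five patterns is missing from R, and it is `1/2/3` or `123`
    by_cases h123 : pat123 ∈ R
    · -- then `1/2/3 ∉ R`, so R is the four patterns other than `1/2/3`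
      have h1_2_3 : pat1_2_3 ∉ R := fun h => hcase ⟨h, h123⟩
      have hsub : R ⊆ {pat1_23, pat12_3, pat13_2, pat123} := by
        intro π hπ
        rcases classify π with rfl | rfl | rfl | rfl | rfl
        · exact absurd hπ h1_2_3
        · exact Set.mem_insert _ _
        · exact Set.mem_insert_of_mem _ (Set.mem_insert _ _)
        · exact Set.mem_insert_of_mem _ (Set.mem_insert_of_mem _ (Set.mem_insert _ _))
        · exact Set.mem_insert_of_mem _ (Set.mem_insert_of_mem _
            (Set.mem_insert_of_mem _ rfl))
      have hReq : R = {pat1_23, pat12_3, pat13_2, pat123} := by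
        refine Set.eq_of_subset_of_ncard_le hsub ?_ (Set.toFinite _)
        have := ncard_le_four' pat1_23 pat12_3 pat13_2 pat123
        omega
      have hset : ({σ : SetPartition n | ∀ π ∈ R, σ.Avoids π}) = {singBlocks n} := by
        ext σ
        simp only [Set.mem_setOf_eq, Set.mem_singleton_iff]
        constructor
        · intro hσ
          rcases dichoC (σ := σ) hn with h | h | h | h | h
          · exact h
          · exact absurd h (hσ pat123 (by rw [hReq]; simp))
          · exact absurd h (hσ pat1_23 (by rw [hReq]; simp))
          · exact absurd h (hσ pat13_2 (by rw [hReq]; simp))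
          · exact absurd h (hσ pat12_3 (by rw [hReq]; simp))
        · rintro rfl π hπ
          rw [hReq] at hπ
          simp only [Set.mem_insert_iff, Set.mem_singleton_iff] at hπ
          rcases hπ with rfl | rfl | rfl | rfl
          · exact singBlocks_avoids (B := {2, 3}) (x := 2) (y := 3) (by decide) (by decide) (by decide)
              (by norm_num)
          · exact singBlocks_avoids (B := {1, 2}) (x := 1) (y := 2) (by decide) (by decide) (by decide)
              (by norm_num)
          · exact singBlocks_avoids (B := {1, 3}) (x := 1) (y := 3) (by decide) (by decide) (by decide)
              (by norm_num)
          · exact singBlocks_avoids (B := {1, 2, 3}) (x := 1) (y := 2) (by decide) (by decide) (by decide)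
              (by norm_num)
      rw [hset, Set.ncard_singleton]
    · -- `123 ∉ R`, so R is the four patterns other than `123`
      have hsub : R ⊆ {pat1_2_3, pat1_23, pat12_3, pat13_2} := by
        intro π hπ
        rcases classify π with rfl | rfl | rfl | rfl | rfl
        · exact Set.mem_insert _ _
        · exact Set.mem_insert_of_mem _ (Set.mem_insert _ _)
        · exact Set.mem_insert_of_mem _ (Set.mem_insert_of_mem _ (Set.mem_insert _ _))
        · exact Set.mem_insert_of_mem _ (Set.mem_insert_of_mem _
            (Set.mem_insert_of_mem _ rfl))
        · exact absurd hπ h123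
      have hReq : R = {pat1_2_3, pat1_23, pat12_3, pat13_2} := by
        refine Set.eq_of_subset_of_ncard_le hsub ?_ (Set.toFinite _)
        have := ncard_le_four' pat1_2_3 pat1_23 pat12_3 pat13_2
        omega
      have hn1 : 1 ≤ n := by omega
      have hset : ({σ : SetPartition n | ∀ π ∈ R, σ.Avoids π}) = {oneBlock n hn1} := by
        ext σ
        simp only [Set.mem_setOf_eq, Set.mem_singleton_iff]
        constructor
        · intro hσ
          rcases dichoB (σ := σ) hn with h | h | h | h | h
          · exact h
          · exact absurd h (hσ pat1_2_3 (by rw [hReq]; simp))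
          · exact absurd h (hσ pat1_23 (by rw [hReq]; simp))
          · exact absurd h (hσ pat13_2 (by rw [hReq]; simp))
          · exact absurd h (hσ pat12_3 (by rw [hReq]; simp))
        · rintro rfl π hπ
          rw [hReq] at hπ
          simp only [Set.mem_insert_iff, Set.mem_singleton_iff] at hπ
          rcases hπ with rfl | rfl | rfl | rfl
          · exact oneBlock_avoids hn1 (B := {1}) (C := {2}) (by decide) (by decide)
              (by decide)
          · exact oneBlock_avoids hn1 (B := {1}) (C := {2, 3}) (by decide) (by decide)
              (by decide)
          · exact oneBlock_avoids hn1 (B := {1, 2}) (C := {3}) (by decide) (by decide)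
              (by decide)
          · exact oneBlock_avoids hn1 (B := {1, 3}) (C := {2}) (by decide) (by decide)
              (by decide)
      rw [hset, Set.ncard_singleton]
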